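/- arXiv:1907.05221 — 4 statements merged into one kernel-verified Lean document; each statement's English description precedes it below -/
import Mathlib

section
/- Let (u, v, ρ, s) be a C¹ supersonic solution of the smooth-flow 2D steady full Euler system on U, with flow angle σ, Mach angle A, α = σ + A, β = σ − A, and suppose cos α ≠ 0 and cos β ≠ 0 on U. Then ∂₊u + tan β · ∂₊v = ω sin A cos A / cos β and ∂₋u + tan α · ∂₋v = −ω sin A cos A / cos α on U, where ω = u_y − vₓ. -/
open Real

noncomputable section

/-- Partial derivative in the `x` direction. -/
def pdx (f : ℝ × ℝ → ℝ) (p : ℝ × ℝ) : ℝ := fderiv ℝ f p (1, 0)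

/-- Partial derivative in the `y` direction. -/
def pdy (f : ℝ × ℝ → ℝ) (p : ℝ × ℝ) : ℝ := fderiv ℝ f p (0, 1)

/-- Directional derivative along the direction with angle `θ p`. -/
def dd (θ : ℝ × ℝ → ℝ) (f : ℝ × ℝ → ℝ) (p : ℝ × ℝ) : ℝ :=
  Real.cos (θ p) * pdx f p + Real.sin (θ p) * pdy f p

/-- Sound speed `c = √(γ s ρ^(γ-1))`. -/
def sound (γ : ℝ) (ρ s : ℝ × ℝ → ℝ) (p : ℝ × ℝ) : ℝ :=
  Real.sqrt (γ * s p * ρ p ^ (γ - 1))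

/-- Flow speed `q = √(u² + v²)`. -/
def speed (u v : ℝ × ℝ → ℝ) (p : ℝ × ℝ) : ℝ :=
  Real.sqrt (u p ^ 2 + v p ^ 2)

/-- Vorticity `ω = u_y − vₓ`. -/
def vort (u v : ℝ × ℝ → ℝ) (p : ℝ × ℝ) : ℝ := pdy u p - pdx v p

/-!
Combining the momentum equations with `u`, `v` and eliminating `∇ρ` by mass conservation and
`∇s` by entropy transport leaves the potential-flow relation
`(u² − c²) uₓ + u v (u_y + vₓ) + (v² − c²) v_y = 0`, in which vorticity does not appear.
Writing `u = q cos σ`, `v = q sin σ`, `c = q sin A` and dividing by `q²` makes it a relation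
between `uₓ, u_y, vₓ, v_y` with trigonometric coefficients; both characteristic identities are
trigonometric rearrangements of it, the `C₋` one being the `C₊` one for the Mach angle `−A`.
-/

section Derivatives

variable {E : Type*} [NormedAddCommGroup E] [NormedSpace ℝ E] {f g ρ s : E → ℝ} {p : E}

theorem fderiv_mul_apply (hf : DifferentiableAt ℝ f p) (hg : DifferentiableAt ℝ g p) (w : E) :
    fderiv ℝ (fun q => f q * g q) p w = f p * fderiv ℝ g p w + g p * fderiv ℝ f p w := by
  simp [fderiv_fun_mul hf hg]

theorem fderiv_mul_rpow_apply (γ : ℝ) (hs : DifferentiableAt ℝ s p)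
    (hρ : DifferentiableAt ℝ ρ p) (hρ0 : ρ p ≠ 0) (w : E) :
    fderiv ℝ (fun q => s q * ρ q ^ γ) p w =
      γ * s p * ρ p ^ (γ - 1) * fderiv ℝ ρ p w + ρ p ^ γ * fderiv ℝ s p w := by
  rw [(hs.hasFDerivAt.fun_mul (hρ.hasFDerivAt.rpow_const (Or.inl hρ0))).fderiv]
  simp only [add_apply, smul_apply, smul_eq_mul]
  ring

end Derivatives

section PartialDerivatives

variable {f g ρ s : ℝ × ℝ → ℝ} {p : ℝ × ℝ}

theorem pdx_mul (hf : DifferentiableAt ℝ f p) (hg : DifferentiableAt ℝ g p) :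
    pdx (fun q => f q * g q) p = f p * pdx g p + g p * pdx f p :=
  fderiv_mul_apply hf hg _

theorem pdy_mul (hf : DifferentiableAt ℝ f p) (hg : DifferentiableAt ℝ g p) :
    pdy (fun q => f q * g q) p = f p * pdy g p + g p * pdy f p :=
  fderiv_mul_apply hf hg _

theorem pdx_mul_rpow (γ : ℝ) (hs : DifferentiableAt ℝ s p) (hρ : DifferentiableAt ℝ ρ p)
    (hρ0 : ρ p ≠ 0) :
    pdx (fun q => s q * ρ q ^ γ) p = γ * s p * ρ p ^ (γ - 1) * pdx ρ p + ρ p ^ γ * pdx s p :=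
  fderiv_mul_rpow_apply γ hs hρ hρ0 _

theorem pdy_mul_rpow (γ : ℝ) (hs : DifferentiableAt ℝ s p) (hρ : DifferentiableAt ℝ ρ p)
    (hρ0 : ρ p ≠ 0) :
    pdy (fun q => s q * ρ q ^ γ) p = γ * s p * ρ p ^ (γ - 1) * pdy ρ p + ρ p ^ γ * pdy s p :=
  fderiv_mul_rpow_apply γ hs hρ hρ0 _

end PartialDerivatives

theorem potential_form_of_euler {ρ u v ux uy vx vy ρx ρy sx sy K R : ℝ} (hρ : ρ ≠ 0)
    (hmass : ρ * ux + u * ρx + (ρ * vy + v * ρy) = 0)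
    (hmomx : u * ux + v * uy + ρ⁻¹ * (K * ρx + R * sx) = 0)
    (hmomy : u * vx + v * vy + ρ⁻¹ * (K * ρy + R * sy) = 0)
    (hent : u * sx + v * sy = 0) :
    (u ^ 2 - K) * ux + u * v * (uy + vx) + (v ^ 2 - K) * vy = 0 := by
  have hinv : ρ⁻¹ * ρ = 1 := inv_mul_cancel₀ hρ
  linear_combination u * hmomx + v * hmomy - ρ⁻¹ * R * hent - ρ⁻¹ * K * hmass
    + K * (ux + vy) * hinv

theorem plus_characteristic_identity {σ A ux uy vx vy : ℝ}
    (h : (cos σ ^ 2 - sin A ^ 2) * ux + sin σ * cos σ * (uy + vx)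
      + (sin σ ^ 2 - sin A ^ 2) * vy = 0)
    (hβ : cos (σ - A) ≠ 0) :
    cos (σ + A) * ux + sin (σ + A) * uy + tan (σ - A) * (cos (σ + A) * vx + sin (σ + A) * vy) =
      (uy - vx) * sin A * cos A / cos (σ - A) := by
  rw [tan_eq_sin_div_cos]
  field_simp
  rw [cos_sub, sin_sub, cos_add, sin_add]
  linear_combination h
    + (cos σ ^ 2 * ux + sin σ * cos σ * (uy + vx) + sin σ ^ 2 * vy) * sin_sq_add_cos_sq A
    + (sin A * cos A * (uy - vx) - sin A ^ 2 * (ux + vy)) * sin_sq_add_cos_sq σ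

theorem minus_characteristic_identity {σ A ux uy vx vy : ℝ}
    (h : (cos σ ^ 2 - sin A ^ 2) * ux + sin σ * cos σ * (uy + vx)
      + (sin σ ^ 2 - sin A ^ 2) * vy = 0)
    (hα : cos (σ + A) ≠ 0) :
    cos (σ - A) * ux + sin (σ - A) * uy + tan (σ + A) * (cos (σ - A) * vx + sin (σ - A) * vy) =
      -((uy - vx) * sin A * cos A) / cos (σ + A) := by
  have := plus_characteristic_identity (A := -A) (by simpa using h) (by simpa using hα)
  simpa [← sub_eq_add_neg, neg_div] using this

theorem stmt_2_general (γ : ℝ) (hγ : 1 < γ) (U : Set (ℝ × ℝ)) (hU : IsOpen U)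
    (u v ρ s σ A : ℝ × ℝ → ℝ)
    (hu : ContDiffOn ℝ 1 u U) (hv : ContDiffOn ℝ 1 v U)
    (hρ : ContDiffOn ℝ 1 ρ U) (hs : ContDiffOn ℝ 1 s U)
    (hρpos : ∀ p ∈ U, 0 < ρ p) (hspos : ∀ p ∈ U, 0 < s p)
    (hmass : ∀ p ∈ U, pdx (fun q => ρ q * u q) p + pdy (fun q => ρ q * v q) p = 0)
    (hmomx : ∀ p ∈ U,
      u p * pdx u p + v p * pdy u p + (ρ p)⁻¹ * pdx (fun q => s q * ρ q ^ γ) p = 0)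
    (hmomy : ∀ p ∈ U,
      u p * pdx v p + v p * pdy v p + (ρ p)⁻¹ * pdy (fun q => s q * ρ q ^ γ) p = 0)
    (hent : ∀ p ∈ U, u p * pdx s p + v p * pdy s p = 0)
    (hsup : ∀ p ∈ U, (sound γ ρ s p) ^ 2 < u p ^ 2 + v p ^ 2)
    (huσ : ∀ p ∈ U, u p = speed u v p * Real.cos (σ p))
    (hvσ : ∀ p ∈ U, v p = speed u v p * Real.sin (σ p))
    (hsinA : ∀ p ∈ U, Real.sin (A p) = sound γ ρ s p / speed u v p)
    (hcosα : ∀ p ∈ U, Real.cos (σ p + A p) ≠ 0)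
    (hcosβ : ∀ p ∈ U, Real.cos (σ p - A p) ≠ 0) :
    ∀ p ∈ U,
      (dd (fun q => σ q + A q) u p +
          Real.tan (σ p - A p) * dd (fun q => σ q + A q) v p =
        vort u v p * Real.sin (A p) * Real.cos (A p) / Real.cos (σ p - A p)) ∧
      (dd (fun q => σ q - A q) u p +
          Real.tan (σ p + A p) * dd (fun q => σ q - A q) v p =
        -(vort u v p * Real.sin (A p) * Real.cos (A p)) / Real.cos (σ p + A p)) := by
  intro p hp
  have hmem := hU.mem_nhds hp
  have du := (hu.contDiffAt hmem).differentiableAt one_ne_zero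
  have dv := (hv.contDiffAt hmem).differentiableAt one_ne_zero
  have dρ := (hρ.contDiffAt hmem).differentiableAt one_ne_zero
  have ds := (hs.contDiffAt hmem).differentiableAt one_ne_zero
  have hρ0 := (hρpos p hp).ne'
  have hpot := potential_form_of_euler hρ0
    (by simpa only [pdx_mul dρ du, pdy_mul dρ dv] using hmass p hp)
    (by simpa only [pdx_mul_rpow γ ds dρ hρ0] using hmomx p hp)
    (by simpa only [pdy_mul_rpow γ ds dρ hρ0] using hmomy p hp)
    (hent p hp)
  have hc2 : sound γ ρ s p ^ 2 = γ * s p * ρ p ^ (γ - 1) :=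
    sq_sqrt (by have := hspos p hp; have := hρpos p hp; positivity)
  have hq : 0 < speed u v p := sqrt_pos.2 ((sq_nonneg _).trans_lt (hsup p hp))
  have hc : sound γ ρ s p = speed u v p * sin (A p) := by
    rw [hsinA p hp]; field_simp
  have hpolar : (cos (σ p) ^ 2 - sin (A p) ^ 2) * pdx u p
      + sin (σ p) * cos (σ p) * (pdy u p + pdx v p)
      + (sin (σ p) ^ 2 - sin (A p) ^ 2) * pdy v p = 0 := by
    rw [← hc2, hc, huσ p hp, hvσ p hp] at hpot
    refine mul_left_cancel₀ (pow_ne_zero 2 hq.ne') ?_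
    linear_combination hpot
  exact ⟨plus_characteristic_identity hpolar (hcosβ p hp),
    minus_characteristic_identity hpolar (hcosα p hp)⟩

/-- along characteristics,
`∂₊u + tan β · ∂₊v = ω sin A cos A / cos β` and
`∂₋u + tan α · ∂₋v = −ω sin A cos A / cos α`. -/
theorem stmt_2 (γ : ℝ) (hγ : 1 < γ) (U : Set (ℝ × ℝ)) (hU : IsOpen U)
    (u v ρ s σ A : ℝ × ℝ → ℝ)
    (hu : ContDiffOn ℝ 1 u U) (hv : ContDiffOn ℝ 1 v U)
    (hρ : ContDiffOn ℝ 1 ρ U) (hs : ContDiffOn ℝ 1 s U)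
    (hσ : ContDiffOn ℝ 1 σ U) (hA : ContDiffOn ℝ 1 A U)
    (hρpos : ∀ p ∈ U, 0 < ρ p) (hspos : ∀ p ∈ U, 0 < s p)
    (hmass : ∀ p ∈ U, pdx (fun q => ρ q * u q) p + pdy (fun q => ρ q * v q) p = 0)
    (hmomx : ∀ p ∈ U,
      u p * pdx u p + v p * pdy u p + (ρ p)⁻¹ * pdx (fun q => s q * ρ q ^ γ) p = 0)
    (hmomy : ∀ p ∈ U,
      u p * pdx v p + v p * pdy v p + (ρ p)⁻¹ * pdy (fun q => s q * ρ q ^ γ) p = 0)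
    (hent : ∀ p ∈ U, u p * pdx s p + v p * pdy s p = 0)
    (hsup : ∀ p ∈ U, (sound γ ρ s p) ^ 2 < u p ^ 2 + v p ^ 2)
    (huσ : ∀ p ∈ U, u p = speed u v p * Real.cos (σ p))
    (hvσ : ∀ p ∈ U, v p = speed u v p * Real.sin (σ p))
    (hsinA : ∀ p ∈ U, Real.sin (A p) = sound γ ρ s p / speed u v p)
    (hA0 : ∀ p ∈ U, 0 < A p) (hA2 : ∀ p ∈ U, A p < Real.pi / 2)
    (hcosα : ∀ p ∈ U, Real.cos (σ p + A p) ≠ 0)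
    (hcosβ : ∀ p ∈ U, Real.cos (σ p - A p) ≠ 0) :
    ∀ p ∈ U,
      (dd (fun q => σ q + A q) u p +
          Real.tan (σ p - A p) * dd (fun q => σ q + A q) v p =
        vort u v p * Real.sin (A p) * Real.cos (A p) / Real.cos (σ p - A p)) ∧
      (dd (fun q => σ q - A q) u p +
          Real.tan (σ p + A p) * dd (fun q => σ q - A q) v p =
        -(vort u v p * Real.sin (A p) * Real.cos (A p)) / Real.cos (σ p + A p)) :=
  stmt_2_general γ hγ U hU u v ρ s σ A hu hv hρ hs hρpos hspos hmass hmomx hmomy hent hsup huσ hvσ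
    hsinA hcosα hcosβ
end
end

section
/- Let (u, v, ρ, s) be a C¹ supersonic solution of the smooth-flow 2D steady full Euler system on U, with flow angle σ, Mach angle A ∈ (0, π/2), α = σ + A, β = σ − A. Then ∂₊c = (c / sin 2A)(∂₊α − cos 2A · ∂₊β) + ω sin²A and ∂₋c = (c / sin 2A)(cos 2A · ∂₋α − ∂₋β) − ω sin²A on U, where ω = u_y − vₓ. -/
/-!
In the streamline frame `e = (cos σ, sin σ)`, `n = (-sin σ, cos σ)` the characteristic directions
are `cos A • e ± sin A • n`. Writing `(u, v) = q e` and `c = q sin A`, the vorticity is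
`ω = ∂ₙq - q ∂ₑσ`, and `∂c = sin A ∂q + q cos A ∂A`. Projecting the momentum equations on `e`
and using `∂ₑs = 0` gives `q ∂ₑq + (c² / ρ) ∂ₑρ = 0`; eliminating `∂ₑρ` with the mass equation
yields `(q² - c²) ∂ₑq = c² q ∂ₙσ`, i.e. `cos² A ∂ₑq = q sin² A ∂ₙσ`. Both identities are
this relation after expanding `∂±` in the frame `(e, n)`.
-/

open Real

noncomputable section

open Filter Topology

def unitVec (θ : ℝ) : ℝ × ℝ := (cos θ, sin θ)

lemma unitVec_add (θ φ : ℝ) :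
    unitVec (θ + φ) = cos φ • unitVec θ + sin φ • unitVec (θ + π / 2) := by
  simp only [unitVec, cos_add_pi_div_two, sin_add_pi_div_two]
  simp only [cos_add, sin_add, Prod.smul_mk, Prod.mk_add_mk, smul_eq_mul, Prod.mk.injEq]
  constructor <;> ring

lemma unitVec_sub (θ φ : ℝ) :
    unitVec (θ - φ) = cos φ • unitVec θ - sin φ • unitVec (θ + π / 2) := by
  simp only [unitVec, cos_add_pi_div_two, sin_add_pi_div_two]
  simp only [cos_sub, sin_sub, Prod.smul_mk, Prod.mk_sub_mk, smul_eq_mul, Prod.mk.injEq]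
  constructor <;> ring

lemma fderiv_apply_mk (f : ℝ × ℝ → ℝ) (p : ℝ × ℝ) (a b : ℝ) :
    fderiv ℝ f p (a, b) = a * pdx f p + b * pdy f p := by
  have hab : ((a, b) : ℝ × ℝ) = a • (1, 0) + b • (0, 1) := by ext <;> simp
  rw [hab, map_add, map_smul, map_smul, smul_eq_mul, smul_eq_mul, pdx, pdy]

lemma dd_eq_fderiv (θ f : ℝ × ℝ → ℝ) (p : ℝ × ℝ) :
    dd θ f p = fderiv ℝ f p (unitVec (θ p)) := by
  rw [unitVec, fderiv_apply_mk, dd]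

lemma pdx_mul_add_pdy_mul {ρ u v : ℝ × ℝ → ℝ} {p : ℝ × ℝ} (hρ : DifferentiableAt ℝ ρ p)
    (hu : DifferentiableAt ℝ u p) (hv : DifferentiableAt ℝ v p) :
    pdx (fun r => ρ r * u r) p + pdy (fun r => ρ r * v r) p =
      u p * pdx ρ p + v p * pdy ρ p + ρ p * (pdx u p + pdy v p) := by
  simp only [pdx, pdy, fderiv_fun_mul hρ hu, fderiv_fun_mul hρ hv, add_apply, smul_apply,
    smul_eq_mul]
  ring

lemma fderiv_apply_mul_rpow {s ρ : ℝ × ℝ → ℝ} {p : ℝ × ℝ} {γ : ℝ}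
    (hs : DifferentiableAt ℝ s p) (hρ : DifferentiableAt ℝ ρ p) (hρ0 : ρ p ≠ 0) (w : ℝ × ℝ) :
    fderiv ℝ (fun r => s r * ρ r ^ γ) p w =
      ρ p ^ γ * fderiv ℝ s p w + γ * s p * ρ p ^ (γ - 1) * fderiv ℝ ρ p w := by
  simp only [fderiv_fun_mul hs (hρ.rpow_const (Or.inl hρ0)),
    (hρ.hasFDerivAt.rpow_const (Or.inl hρ0)).fderiv, add_apply, smul_apply, smul_eq_mul]
  ring

lemma sound_sq {γ : ℝ} {ρ s : ℝ × ℝ → ℝ} {p : ℝ × ℝ} (h : sound γ ρ s p ≠ 0) :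
    sound γ ρ s p ^ 2 = γ * s p * ρ p ^ (γ - 1) :=
  sq_sqrt (sqrt_ne_zero'.1 h).le

lemma differentiableAt_speed {u v : ℝ × ℝ → ℝ} {p : ℝ × ℝ} (hu : DifferentiableAt ℝ u p)
    (hv : DifferentiableAt ℝ v p) (h : speed u v p ≠ 0) : DifferentiableAt ℝ (speed u v) p := by
  have hsq : u p ^ 2 + v p ^ 2 ≠ 0 := fun h0 => h (by rw [speed, h0, sqrt_zero])
  unfold speed
  fun_prop (disch := exact hsq)

section Polar

variable {u v q σ : ℝ × ℝ → ℝ} {p : ℝ × ℝ}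

lemma mul_pdx_add_mul_pdy_of_polar (hu : u p = q p * cos (σ p)) (hv : v p = q p * sin (σ p))
    (f : ℝ × ℝ → ℝ) :
    u p * pdx f p + v p * pdy f p = q p * fderiv ℝ f p (unitVec (σ p)) := by
  rw [unitVec, fderiv_apply_mk, hu, hv]; ring

lemma fderiv_apply_of_polar_fst (hq : DifferentiableAt ℝ q p) (hσ : DifferentiableAt ℝ σ p)
    (hu : u =ᶠ[𝓝 p] fun r => q r * cos (σ r)) (w : ℝ × ℝ) :
    fderiv ℝ u p w = cos (σ p) * fderiv ℝ q p w - q p * sin (σ p) * fderiv ℝ σ p w := by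
  simp only [hu.fderiv_eq, fderiv_fun_mul hq hσ.cos, fderiv_cos hσ, neg_smul, smul_neg, add_apply,
    neg_apply, smul_apply, smul_eq_mul]
  ring

lemma fderiv_apply_of_polar_snd (hq : DifferentiableAt ℝ q p) (hσ : DifferentiableAt ℝ σ p)
    (hv : v =ᶠ[𝓝 p] fun r => q r * sin (σ r)) (w : ℝ × ℝ) :
    fderiv ℝ v p w = sin (σ p) * fderiv ℝ q p w + q p * cos (σ p) * fderiv ℝ σ p w := by
  simp only [hv.fderiv_eq, fderiv_fun_mul hq hσ.sin, fderiv_sin hσ, add_apply, smul_apply,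
    smul_eq_mul]
  ring

lemma cos_mul_add_sin_mul_of_polar (hq : DifferentiableAt ℝ q p) (hσ : DifferentiableAt ℝ σ p)
    (hu : u =ᶠ[𝓝 p] fun r => q r * cos (σ r)) (hv : v =ᶠ[𝓝 p] fun r => q r * sin (σ r))
    (w : ℝ × ℝ) :
    cos (σ p) * fderiv ℝ u p w + sin (σ p) * fderiv ℝ v p w = fderiv ℝ q p w := by
  rw [fderiv_apply_of_polar_fst hq hσ hu, fderiv_apply_of_polar_snd hq hσ hv]
  linear_combination fderiv ℝ q p w * cos_sq_add_sin_sq (σ p)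

lemma vort_eq_of_polar (hq : DifferentiableAt ℝ q p) (hσ : DifferentiableAt ℝ σ p)
    (hu : u =ᶠ[𝓝 p] fun r => q r * cos (σ r)) (hv : v =ᶠ[𝓝 p] fun r => q r * sin (σ r)) :
    vort u v p =
      fderiv ℝ q p (unitVec (σ p + π / 2)) - q p * fderiv ℝ σ p (unitVec (σ p)) := by
  rw [vort, pdx, pdy, fderiv_apply_of_polar_fst hq hσ hu, fderiv_apply_of_polar_snd hq hσ hv]
  simp only [unitVec, cos_add_pi_div_two, sin_add_pi_div_two, fderiv_apply_mk]
  ring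

lemma pdx_add_pdy_of_polar (hq : DifferentiableAt ℝ q p) (hσ : DifferentiableAt ℝ σ p)
    (hu : u =ᶠ[𝓝 p] fun r => q r * cos (σ r)) (hv : v =ᶠ[𝓝 p] fun r => q r * sin (σ r)) :
    pdx u p + pdy v p =
      fderiv ℝ q p (unitVec (σ p)) + q p * fderiv ℝ σ p (unitVec (σ p + π / 2)) := by
  rw [pdx, pdy, fderiv_apply_of_polar_fst hq hσ hu, fderiv_apply_of_polar_snd hq hσ hv]
  simp only [unitVec, cos_add_pi_div_two, sin_add_pi_div_two, fderiv_apply_mk]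
  ring

end Polar

theorem euler_speed_streamline_eq {γ : ℝ} {u v ρ s q σ : ℝ × ℝ → ℝ} {p : ℝ × ℝ}
    (hρ : DifferentiableAt ℝ ρ p) (hs : DifferentiableAt ℝ s p)
    (hq : DifferentiableAt ℝ q p) (hσ : DifferentiableAt ℝ σ p)
    (hρ0 : ρ p ≠ 0) (hq0 : q p ≠ 0)
    (hu : u =ᶠ[𝓝 p] fun r => q r * cos (σ r)) (hv : v =ᶠ[𝓝 p] fun r => q r * sin (σ r))
    (hmass : pdx (fun r => ρ r * u r) p + pdy (fun r => ρ r * v r) p = 0)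
    (hmomx : u p * pdx u p + v p * pdy u p + (ρ p)⁻¹ * pdx (fun r => s r * ρ r ^ γ) p = 0)
    (hmomy : u p * pdx v p + v p * pdy v p + (ρ p)⁻¹ * pdy (fun r => s r * ρ r ^ γ) p = 0)
    (hent : u p * pdx s p + v p * pdy s p = 0) :
    (q p ^ 2 - γ * s p * ρ p ^ (γ - 1)) * fderiv ℝ q p (unitVec (σ p)) =
      γ * s p * ρ p ^ (γ - 1) * q p * fderiv ℝ σ p (unitVec (σ p + π / 2)) := by
  set e := unitVec (σ p)
  have hconv := mul_pdx_add_mul_pdy_of_polar hu.eq_of_nhds hv.eq_of_nhds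
  have hud : DifferentiableAt ℝ u p := (hq.mul hσ.cos).congr_of_eventuallyEq hu
  have hvd : DifferentiableAt ℝ v p := (hq.mul hσ.sin).congr_of_eventuallyEq hv
  rw [pdx_mul_add_pdy_mul hρ hud hvd, hconv, pdx_add_pdy_of_polar hq hσ hu hv] at hmass
  rw [hconv] at hent
  have hent' : fderiv ℝ s p e = 0 := (mul_eq_zero.1 hent).resolve_left hq0
  have hpres : fderiv ℝ (fun r => s r * ρ r ^ γ) p e =
      cos (σ p) * pdx (fun r => s r * ρ r ^ γ) p + sin (σ p) * pdy (fun r => s r * ρ r ^ γ) p :=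
    fderiv_apply_mk _ _ _ _
  have hmom : q p * fderiv ℝ q p e + (ρ p)⁻¹ * fderiv ℝ (fun r => s r * ρ r ^ γ) p e = 0 :=
    calc q p * fderiv ℝ q p e + (ρ p)⁻¹ * fderiv ℝ (fun r => s r * ρ r ^ γ) p e
        = cos (σ p) * (u p * pdx u p + v p * pdy u p +
            (ρ p)⁻¹ * pdx (fun r => s r * ρ r ^ γ) p) +
          sin (σ p) * (u p * pdx v p + v p * pdy v p +
            (ρ p)⁻¹ * pdy (fun r => s r * ρ r ^ γ) p) := by
          rw [hconv, hconv, hpres, ← cos_mul_add_sin_mul_of_polar hq hσ hu hv]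
          ring
      _ = 0 := by rw [hmomx, hmomy]; ring
  rw [fderiv_apply_mul_rpow hs hρ hρ0, hent', mul_zero, zero_add] at hmom
  apply mul_left_cancel₀ hρ0
  field_simp at hmom
  linear_combination q p * hmom - γ * s p * ρ p ^ (γ - 1) * hmass

theorem dd_sound_of_speed_streamline_eq {c q σ A : ℝ × ℝ → ℝ} {p : ℝ × ℝ} {ω : ℝ}
    (hq : DifferentiableAt ℝ q p) (hσ : DifferentiableAt ℝ σ p) (hA : DifferentiableAt ℝ A p)
    (hc : c =ᶠ[𝓝 p] fun r => q r * sin (A r))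
    (hq0 : q p ≠ 0) (hsin : sin (A p) ≠ 0) (hcos : cos (A p) ≠ 0)
    (hstream : (q p ^ 2 - c p ^ 2) * fderiv ℝ q p (unitVec (σ p)) =
      c p ^ 2 * q p * fderiv ℝ σ p (unitVec (σ p + π / 2)))
    (hω : ω = fderiv ℝ q p (unitVec (σ p + π / 2)) - q p * fderiv ℝ σ p (unitVec (σ p))) :
    (dd (fun r => σ r + A r) c p =
        c p / sin (2 * A p) *
          (dd (fun r => σ r + A r) (fun r => σ r + A r) p -
            cos (2 * A p) * dd (fun r => σ r + A r) (fun r => σ r - A r) p) +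
        ω * sin (A p) ^ 2) ∧
      (dd (fun r => σ r - A r) c p =
        c p / sin (2 * A p) *
          (cos (2 * A p) * dd (fun r => σ r - A r) (fun r => σ r + A r) p -
            dd (fun r => σ r - A r) (fun r => σ r - A r) p) -
        ω * sin (A p) ^ 2) := by
  have hcp : c p = q p * sin (A p) := hc.eq_of_nhds
  have hstream' : cos (A p) ^ 2 * fderiv ℝ q p (unitVec (σ p)) =
      q p * sin (A p) ^ 2 * fderiv ℝ σ p (unitVec (σ p + π / 2)) := by
    apply mul_left_cancel₀ (pow_ne_zero 2 hq0)
    rw [hcp] at hstream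
    linear_combination hstream + q p ^ 2 * fderiv ℝ q p (unitVec (σ p)) * cos_sq_add_sin_sq (A p)
  have hDc (w : ℝ × ℝ) :
      fderiv ℝ c p w = sin (A p) * fderiv ℝ q p w + q p * cos (A p) * fderiv ℝ A p w := by
    simp only [hc.fderiv_eq, fderiv_fun_mul hq hA.sin, fderiv_sin hA, add_apply, smul_apply,
      smul_eq_mul]
    ring
  simp only [dd_eq_fderiv]
  rw [unitVec_add, unitVec_sub]
  set e := unitVec (σ p)
  set n := unitVec (σ p + π / 2)
  simp only [hDc, fderiv_fun_add hσ hA, fderiv_fun_sub hσ hA, add_apply, sub_apply, map_add,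
    map_sub, map_smul, smul_eq_mul, sin_two_mul, cos_two_mul', hcp, hω]
  have h2 : 2 * sin (A p) * cos (A p) ≠ 0 := mul_ne_zero (mul_ne_zero two_ne_zero hsin) hcos
  have hpyth := cos_sq_add_sin_sq (A p)
  constructor
  · rw [div_mul_eq_mul_div, div_add' _ _ _ h2, eq_div_iff h2]
    linear_combination 2 * sin (A p) ^ 2 * hstream' + q p * sin (A p) *
      (cos (A p) * fderiv ℝ σ p e + sin (A p) * fderiv ℝ σ p n +
        cos (A p) * fderiv ℝ A p e + sin (A p) * fderiv ℝ A p n) * hpyth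
  · rw [div_mul_eq_mul_div, div_sub' h2, eq_div_iff h2]
    linear_combination 2 * sin (A p) ^ 2 * hstream' - q p * sin (A p) *
      (cos (A p) * fderiv ℝ σ p e - sin (A p) * fderiv ℝ σ p n -
        cos (A p) * fderiv ℝ A p e + sin (A p) * fderiv ℝ A p n) * hpyth

theorem stmt_4_general (γ : ℝ) (U : Set (ℝ × ℝ)) (hU : IsOpen U)
    (u v ρ s σ A : ℝ × ℝ → ℝ)
    (hu : ContDiffOn ℝ 1 u U) (hv : ContDiffOn ℝ 1 v U)
    (hρ : ContDiffOn ℝ 1 ρ U) (hs : ContDiffOn ℝ 1 s U)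
    (hσ : ContDiffOn ℝ 1 σ U) (hA : ContDiffOn ℝ 1 A U)
    (hρpos : ∀ p ∈ U, 0 < ρ p)
    (hmass : ∀ p ∈ U, pdx (fun q => ρ q * u q) p + pdy (fun q => ρ q * v q) p = 0)
    (hmomx : ∀ p ∈ U,
      u p * pdx u p + v p * pdy u p + (ρ p)⁻¹ * pdx (fun q => s q * ρ q ^ γ) p = 0)
    (hmomy : ∀ p ∈ U,
      u p * pdx v p + v p * pdy v p + (ρ p)⁻¹ * pdy (fun q => s q * ρ q ^ γ) p = 0)
    (hent : ∀ p ∈ U, u p * pdx s p + v p * pdy s p = 0)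
    (huσ : ∀ p ∈ U, u p = speed u v p * Real.cos (σ p))
    (hvσ : ∀ p ∈ U, v p = speed u v p * Real.sin (σ p))
    (hsinA : ∀ p ∈ U, Real.sin (A p) = sound γ ρ s p / speed u v p)
    (hA0 : ∀ p ∈ U, 0 < A p) (hA2 : ∀ p ∈ U, A p < Real.pi / 2)
    :
    ∀ p ∈ U,
      (dd (fun q => σ q + A q) (sound γ ρ s) p =
        sound γ ρ s p / Real.sin (2 * A p) *
          (dd (fun q => σ q + A q) (fun q => σ q + A q) p -
            Real.cos (2 * A p) * dd (fun q => σ q + A q) (fun q => σ q - A q) p) +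
        vort u v p * Real.sin (A p) ^ 2) ∧
      (dd (fun q => σ q - A q) (sound γ ρ s) p =
        sound γ ρ s p / Real.sin (2 * A p) *
          (Real.cos (2 * A p) * dd (fun q => σ q - A q) (fun q => σ q + A q) p -
            dd (fun q => σ q - A q) (fun q => σ q - A q) p) -
        vort u v p * Real.sin (A p) ^ 2) := by
  have hsin : ∀ r ∈ U, 0 < sin (A r) := fun r hr =>
    sin_pos_of_pos_of_lt_pi (hA0 r hr) (by linarith [hA2 r hr, pi_pos])
  have hspeed : ∀ r ∈ U, speed u v r ≠ 0 := fun r hr h0 => by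
    have h := hsinA r hr
    rw [h0, div_zero] at h
    exact (hsin r hr).ne' h
  intro p hp
  have hnhds := hU.mem_nhds hp
  have hdiff {f : ℝ × ℝ → ℝ} (hf : ContDiffOn ℝ 1 f U) : DifferentiableAt ℝ f p :=
    (hf.contDiffAt hnhds).differentiableAt one_ne_zero
  have hq := differentiableAt_speed (hdiff hu) (hdiff hv) (hspeed p hp)
  have hc : sound γ ρ s =ᶠ[𝓝 p] fun r => speed u v r * sin (A r) :=
    eventually_of_mem hnhds fun r hr => by
      beta_reduce
      rw [hsinA r hr, mul_div_cancel₀ _ (hspeed r hr)]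
  have hc2 := sound_sq (by rw [hc.eq_of_nhds]; exact mul_ne_zero (hspeed p hp) (hsin p hp).ne')
  have hpolar_u : u =ᶠ[𝓝 p] fun r => speed u v r * cos (σ r) := eventually_of_mem hnhds huσ
  have hpolar_v : v =ᶠ[𝓝 p] fun r => speed u v r * sin (σ r) := eventually_of_mem hnhds hvσ
  have hstream := euler_speed_streamline_eq (hdiff hρ) (hdiff hs) hq (hdiff hσ) (hρpos p hp).ne'
    (hspeed p hp) hpolar_u hpolar_v (hmass p hp) (hmomx p hp) (hmomy p hp) (hent p hp)
  rw [← hc2] at hstream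
  exact dd_sound_of_speed_streamline_eq hq (hdiff hσ) (hdiff hA) hc (hspeed p hp) (hsin p hp).ne'
    (cos_pos_of_mem_Ioo ⟨by linarith [hA0 p hp, pi_pos], hA2 p hp⟩).ne' hstream
    (vort_eq_of_polar hq (hdiff hσ) hpolar_u hpolar_v)

/-- `∂₊c = (c / sin 2A)(∂₊α − cos 2A · ∂₊β) + ω sin²A` and
`∂₋c = (c / sin 2A)(cos 2A · ∂₋α − ∂₋β) − ω sin²A`. -/
theorem stmt_4 (γ : ℝ) (hγ : 1 < γ) (U : Set (ℝ × ℝ)) (hU : IsOpen U)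
    (u v ρ s σ A : ℝ × ℝ → ℝ)
    (hu : ContDiffOn ℝ 1 u U) (hv : ContDiffOn ℝ 1 v U)
    (hρ : ContDiffOn ℝ 1 ρ U) (hs : ContDiffOn ℝ 1 s U)
    (hσ : ContDiffOn ℝ 1 σ U) (hA : ContDiffOn ℝ 1 A U)
    (hρpos : ∀ p ∈ U, 0 < ρ p) (hspos : ∀ p ∈ U, 0 < s p)
    (hmass : ∀ p ∈ U, pdx (fun q => ρ q * u q) p + pdy (fun q => ρ q * v q) p = 0)
    (hmomx : ∀ p ∈ U,
      u p * pdx u p + v p * pdy u p + (ρ p)⁻¹ * pdx (fun q => s q * ρ q ^ γ) p = 0)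
    (hmomy : ∀ p ∈ U,
      u p * pdx v p + v p * pdy v p + (ρ p)⁻¹ * pdy (fun q => s q * ρ q ^ γ) p = 0)
    (hent : ∀ p ∈ U, u p * pdx s p + v p * pdy s p = 0)
    (hsup : ∀ p ∈ U, (sound γ ρ s p) ^ 2 < u p ^ 2 + v p ^ 2)
    (huσ : ∀ p ∈ U, u p = speed u v p * Real.cos (σ p))
    (hvσ : ∀ p ∈ U, v p = speed u v p * Real.sin (σ p))
    (hsinA : ∀ p ∈ U, Real.sin (A p) = sound γ ρ s p / speed u v p)
    (hA0 : ∀ p ∈ U, 0 < A p) (hA2 : ∀ p ∈ U, A p < Real.pi / 2)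
    :
    ∀ p ∈ U,
      (dd (fun q => σ q + A q) (sound γ ρ s) p =
        sound γ ρ s p / Real.sin (2 * A p) *
          (dd (fun q => σ q + A q) (fun q => σ q + A q) p -
            Real.cos (2 * A p) * dd (fun q => σ q + A q) (fun q => σ q - A q) p) +
        vort u v p * Real.sin (A p) ^ 2) ∧
      (dd (fun q => σ q - A q) (sound γ ρ s) p =
        sound γ ρ s p / Real.sin (2 * A p) *
          (Real.cos (2 * A p) * dd (fun q => σ q - A q) (fun q => σ q + A q) p -
            dd (fun q => σ q - A q) (fun q => σ q - A q) p) -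
        vort u v p * Real.sin (A p) ^ 2) :=
  stmt_4_general γ U hU u v ρ s σ A hu hv hρ hs hσ hA hρpos hmass hmomx hmomy hent huσ hvσ hsinA hA0
    hA2

end
end

section
/- Let (u, v, ρ, s) be a C² supersonic solution of the smooth-flow 2D steady full Euler system on U, with flow angle σ, Mach angle A ∈ (0, π/2), α = σ + A, and ω = u_y − vₓ. Then on U: ∂₀(ω/ρ) = −(∂₊s / c^{(γ+1)/(γ−1)}) · (sγ)^{1/(γ−1)} / (γ(γ−1)s) · ∂₀(c²). -/
open Real

noncomputable section

/-!
Taking the curl of the momentum equations and eliminating the divergence with the continuity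
equation gives the vorticity transport law `(u, v) · ∇(ω/ρ) = (ρ_y p_x - ρ_x p_y) / ρ³`; for
`p = s ρ^γ` the Jacobian on the right is `ρ^γ (ρ_y s_x - ρ_x s_y)`. Since `∂₀ s = 0`, the
gradient of `s` is normal to the streamlines, so with `∂ₙ = cos σ ∂_y - sin σ ∂ₓ` this Jacobian
is `-∂₀ρ ∂ₙs`, while `∂₊ s = sin A ∂ₙ s` and `∂₀(c²) = γ(γ-1) s ρ^(γ-2) ∂₀ρ`. The identities
`q ∂₀ = u ∂ₓ + v ∂_y`, `sin A = c / q` and `c^((γ+1)/(γ-1)) = c (sγ)^(1/(γ-1)) ρ` (from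
`c² = γ s ρ^(γ-1)`) then match both sides.
-/

open Filter Topology

section DirectionalDerivative

variable {E : Type*} [NormedAddCommGroup E] [NormedSpace ℝ E] {f g : E → ℝ} {x v : E}

theorem fderiv_fun_add_apply (hf : DifferentiableAt ℝ f x) (hg : DifferentiableAt ℝ g x) :
    fderiv ℝ (fun y => f y + g y) x v = fderiv ℝ f x v + fderiv ℝ g x v := by
  rw [fderiv_fun_add hf hg]; rfl

theorem fderiv_fun_sub_apply (hf : DifferentiableAt ℝ f x) (hg : DifferentiableAt ℝ g x) :
    fderiv ℝ (fun y => f y - g y) x v = fderiv ℝ f x v - fderiv ℝ g x v := by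
  rw [fderiv_fun_sub hf hg]; rfl

theorem fderiv_fun_mul_apply (hf : DifferentiableAt ℝ f x) (hg : DifferentiableAt ℝ g x) :
    fderiv ℝ (fun y => f y * g y) x v = f x * fderiv ℝ g x v + g x * fderiv ℝ f x v := by
  simp [fderiv_fun_mul hf hg]

theorem fderiv_fun_inv_apply (hf : DifferentiableAt ℝ f x) (hx : f x ≠ 0) :
    fderiv ℝ (fun y => (f y)⁻¹) x v = -fderiv ℝ f x v / f x ^ 2 := by
  have h : HasFDerivAt (fun y => (f y)⁻¹) (-(f x ^ 2)⁻¹ • fderiv ℝ f x) x :=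
    (hasDerivAt_inv hx).comp_hasFDerivAt x hf.hasFDerivAt
  rw [h.fderiv]
  simp [div_eq_inv_mul]

theorem fderiv_fun_div_apply (hf : DifferentiableAt ℝ f x) (hg : DifferentiableAt ℝ g x)
    (hx : g x ≠ 0) :
    fderiv ℝ (fun y => f y / g y) x v
      = (fderiv ℝ f x v * g x - f x * fderiv ℝ g x v) / g x ^ 2 := by
  simp only [div_eq_mul_inv]
  rw [fderiv_fun_mul_apply (g := fun y => (g y)⁻¹) hf (hg.inv hx), fderiv_fun_inv_apply hg hx]
  field_simp
  ring

theorem fderiv_fun_rpow_const_apply (hf : DifferentiableAt ℝ f x) (hx : f x ≠ 0) (r : ℝ) :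
    fderiv ℝ (fun y => f y ^ r) x v = r * f x ^ (r - 1) * fderiv ℝ f x v := by
  rw [(hf.hasFDerivAt.rpow_const (Or.inl hx)).fderiv]
  rfl

theorem fderiv_mul_rpow_apply_s11 (hf : DifferentiableAt ℝ f x) (hg : DifferentiableAt ℝ g x)
    (hx : g x ≠ 0) (r : ℝ) :
    fderiv ℝ (fun y => f y * g y ^ r) x v
      = g x ^ r * fderiv ℝ f x v + r * f x * g x ^ (r - 1) * fderiv ℝ g x v := by
  rw [fderiv_fun_mul_apply hf (hg.rpow_const (Or.inl hx)), fderiv_fun_rpow_const_apply hg hx]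
  ring

theorem fderiv_apply_eq_zero_of_eventually_eq_zero (h : ∀ᶠ y in 𝓝 x, f y = 0) (w : E) :
    fderiv ℝ f x w = 0 := by
  rw [(show f =ᶠ[𝓝 x] fun _ => (0 : ℝ) from h).fderiv_eq, fderiv_const_apply]
  rfl

end DirectionalDerivative

section SecondDerivative

variable {E F : Type*} [NormedAddCommGroup E] [NormedSpace ℝ E] [NormedAddCommGroup F]
  [NormedSpace ℝ F] {f : E → F} {x : E}

theorem ContDiffAt.differentiableAt_fderiv_apply (hf : ContDiffAt ℝ 2 f x) (w : E) :
    DifferentiableAt ℝ (fun y => fderiv ℝ f y w) x :=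
  ((hf.fderiv_right (m := 1) (by norm_num)).differentiableAt (by norm_num)).clm_apply
    (differentiableAt_const w)

theorem ContDiffAt.fderiv_fderiv_apply_comm (hf : ContDiffAt ℝ 2 f x) (v w : E) :
    fderiv ℝ (fun y => fderiv ℝ f y w) x v = fderiv ℝ (fun y => fderiv ℝ f y v) x w := by
  have hd := (hf.fderiv_right (m := 1) (by norm_num)).differentiableAt (by norm_num)
  rw [fderiv_clm_apply hd (differentiableAt_const w),
    fderiv_clm_apply hd (differentiableAt_const v)]
  simpa using hf.isSymmSndFDerivAt (by simp) v w

end SecondDerivative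

theorem rpow_div_sub_one_eq_of_sq_eq {c k r γ : ℝ} (hc : 0 < c) (hr : 0 < r) (hγ : γ ≠ 1)
    (h : c ^ 2 = k * r ^ (γ - 1)) : c ^ ((γ + 1) / (γ - 1)) = c * k ^ (1 / (γ - 1)) * r := by
  have hk : 0 < k := pos_of_mul_pos_left (h ▸ pow_pos hc 2) (rpow_nonneg hr.le _)
  have hγ' : γ - 1 ≠ 0 := sub_ne_zero.2 hγ
  calc c ^ ((γ + 1) / (γ - 1)) = c * (c ^ 2) ^ (1 / (γ - 1)) := by
        rw [show (γ + 1) / (γ - 1) = 1 + 2 * (1 / (γ - 1)) by field_simp; ring,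
          rpow_add hc, rpow_one, rpow_mul hc.le, rpow_two]
    _ = c * k ^ (1 / (γ - 1)) * r := by
        rw [h, mul_rpow hk.le (rpow_nonneg hr.le _), ← rpow_mul hr.le, mul_one_div_cancel hγ',
          rpow_one, mul_assoc]

section Directional

variable {σ A f : ℝ × ℝ → ℝ} {p : ℝ × ℝ}

theorem dd_add_eq_of_dd_eq_zero (h : dd σ f p = 0) :
    dd (fun r => σ r + A r) f p = sin (A p) * (cos (σ p) * pdy f p - sin (σ p) * pdx f p) := by
  rw [dd] at h ⊢
  rw [cos_add, sin_add]
  linear_combination cos (A p) * h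

theorem pdy_mul_pdx_sub_pdx_mul_pdy_of_dd_eq_zero (h : dd σ f p = 0) (g : ℝ × ℝ → ℝ) :
    pdy g p * pdx f p - pdx g p * pdy f p
      = -(dd σ g p * (cos (σ p) * pdy f p - sin (σ p) * pdx f p)) := by
  rw [dd] at h ⊢
  linear_combination (cos (σ p) * pdy g p - sin (σ p) * pdx g p) * h
    - (pdy g p * pdx f p - pdx g p * pdy f p) * sin_sq_add_cos_sq (σ p)

end Directional

section SteadyEuler

variable {u v ρ P : ℝ × ℝ → ℝ} {p : ℝ × ℝ}

theorem fderiv_momentum_apply {f g : ℝ × ℝ → ℝ} (hu : DifferentiableAt ℝ u p)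
    (hv : DifferentiableAt ℝ v p) (hρ : DifferentiableAt ℝ ρ p) (hρp : ρ p ≠ 0)
    (hf : ContDiffAt ℝ 2 f p) (hg : DifferentiableAt ℝ g p) (w : ℝ × ℝ) :
    fderiv ℝ (fun q => u q * pdx f q + v q * pdy f q + (ρ q)⁻¹ * g q) p w
      = u p * fderiv ℝ (pdx f) p w + pdx f p * fderiv ℝ u p w
        + (v p * fderiv ℝ (pdy f) p w + pdy f p * fderiv ℝ v p w)
        + ((ρ p)⁻¹ * fderiv ℝ g p w - g p * fderiv ℝ ρ p w / ρ p ^ 2) := by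
  have hfx : DifferentiableAt ℝ (pdx f) p := hf.differentiableAt_fderiv_apply _
  have hfy : DifferentiableAt ℝ (pdy f) p := hf.differentiableAt_fderiv_apply _
  have hρinv : DifferentiableAt ℝ (fun q => (ρ q)⁻¹) p := hρ.inv hρp
  rw [fderiv_fun_add_apply ((hu.fun_mul hfx).fun_add (hv.fun_mul hfy)) (hρinv.fun_mul hg),
    fderiv_fun_add_apply (hu.fun_mul hfx) (hv.fun_mul hfy), fderiv_fun_mul_apply hu hfx,
    fderiv_fun_mul_apply hv hfy, fderiv_fun_mul_apply hρinv hg,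
    fderiv_fun_inv_apply hρ hρp]
  ring

theorem curl_momentum (hu : ContDiffAt ℝ 2 u p) (hv : ContDiffAt ℝ 2 v p)
    (hρ : DifferentiableAt ℝ ρ p) (hρp : ρ p ≠ 0) (hP : ContDiffAt ℝ 2 P p)
    (hmomx : ∀ᶠ q in 𝓝 p, u q * pdx u q + v q * pdy u q + (ρ q)⁻¹ * pdx P q = 0)
    (hmomy : ∀ᶠ q in 𝓝 p, u q * pdx v q + v q * pdy v q + (ρ q)⁻¹ * pdy P q = 0) :
    u p * pdx (vort u v) p + v p * pdy (vort u v) p + (pdx u p + pdy v p) * vort u v p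
      = (pdy ρ p * pdx P p - pdx ρ p * pdy P p) / ρ p ^ 2 := by
  have du := hu.differentiableAt two_ne_zero
  have dv := hv.differentiableAt two_ne_zero
  have hx := fderiv_apply_eq_zero_of_eventually_eq_zero hmomx (0, 1)
  have hy := fderiv_apply_eq_zero_of_eventually_eq_zero hmomy (1, 0)
  have dPx : DifferentiableAt ℝ (pdx P) p := hP.differentiableAt_fderiv_apply _
  have dPy : DifferentiableAt ℝ (pdy P) p := hP.differentiableAt_fderiv_apply _
  rw [fderiv_momentum_apply du dv hρ hρp hu dPx] at hx
  rw [fderiv_momentum_apply du dv hρ hρp hv dPy] at hy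
  have hvort (w : ℝ × ℝ) :
      fderiv ℝ (vort u v) p w = fderiv ℝ (pdy u) p w - fderiv ℝ (pdx v) p w :=
    fderiv_fun_sub_apply (hu.differentiableAt_fderiv_apply _) (hv.differentiableAt_fderiv_apply _)
  have hPsymm : fderiv ℝ (pdy P) p (1, 0) = fderiv ℝ (pdx P) p (0, 1) :=
    hP.fderiv_fderiv_apply_comm _ _
  have husymm : fderiv ℝ (pdx u) p (0, 1) = fderiv ℝ (pdy u) p (1, 0) :=
    hu.fderiv_fderiv_apply_comm _ _
  have hvsymm : fderiv ℝ (pdy v) p (1, 0) = fderiv ℝ (pdx v) p (0, 1) :=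
    hv.fderiv_fderiv_apply_comm _ _
  rw [pdx, pdy, hvort, hvort, vort, eq_div_iff (pow_ne_zero 2 hρp)]
  simp only [pdx, pdy] at *
  linear_combination (norm := skip) ρ p ^ 2 * (hx - hy) - ρ p ^ 2 * u p * husymm
    + ρ p ^ 2 * v p * hvsymm + ρ p * hPsymm
  field_simp
  ring

theorem vorticity_transport (hu : ContDiffAt ℝ 2 u p) (hv : ContDiffAt ℝ 2 v p)
    (hρ : DifferentiableAt ℝ ρ p) (hρp : ρ p ≠ 0) (hP : ContDiffAt ℝ 2 P p)
    (hmass : pdx (fun q => ρ q * u q) p + pdy (fun q => ρ q * v q) p = 0)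
    (hmomx : ∀ᶠ q in 𝓝 p, u q * pdx u q + v q * pdy u q + (ρ q)⁻¹ * pdx P q = 0)
    (hmomy : ∀ᶠ q in 𝓝 p, u q * pdx v q + v q * pdy v q + (ρ q)⁻¹ * pdy P q = 0) :
    u p * pdx (fun q => vort u v q / ρ q) p + v p * pdy (fun q => vort u v q / ρ q) p
      = (pdy ρ p * pdx P p - pdx ρ p * pdy P p) / ρ p ^ 3 := by
  have hcurl := curl_momentum hu hv hρ hρp hP hmomx hmomy
  have du := hu.differentiableAt two_ne_zero
  have dv := hv.differentiableAt two_ne_zero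
  have hω : DifferentiableAt ℝ (vort u v) p :=
    (hu.differentiableAt_fderiv_apply _).sub (hv.differentiableAt_fderiv_apply _)
  rw [pdx, pdy, fderiv_fun_mul_apply hρ du, fderiv_fun_mul_apply hρ dv] at hmass
  rw [pdx, pdy, fderiv_fun_div_apply hω hρ hρp, fderiv_fun_div_apply hω hρ hρp]
  simp only [pdx, pdy] at hcurl ⊢
  field_simp at hcurl ⊢
  linear_combination hcurl - ρ p * vort u v p * hmass

end SteadyEuler

section Polytropic

variable {ρ s : ℝ × ℝ → ℝ} {p : ℝ × ℝ}

theorem pdy_mul_pdx_sub_pdx_mul_pdy_mul_rpow (hs : DifferentiableAt ℝ s p)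
    (hρ : DifferentiableAt ℝ ρ p) (hρp : ρ p ≠ 0) (γ : ℝ) :
    pdy ρ p * pdx (fun q => s q * ρ q ^ γ) p - pdx ρ p * pdy (fun q => s q * ρ q ^ γ) p
      = ρ p ^ γ * (pdy ρ p * pdx s p - pdx ρ p * pdy s p) := by
  simp only [pdx, pdy]
  rw [fderiv_mul_rpow_apply_s11 hs hρ hρp, fderiv_mul_rpow_apply_s11 hs hρ hρp]
  ring

theorem dd_sound_sq {γ : ℝ} (hs : DifferentiableAt ℝ s p) (hρ : DifferentiableAt ℝ ρ p)
    (hρp : ρ p ≠ 0) (hc : ∀ᶠ q in 𝓝 p, 0 ≤ γ * s q * ρ q ^ (γ - 1)) (θ : ℝ × ℝ → ℝ) :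
    dd θ (fun q => sound γ ρ s q ^ 2) p
      = γ * (ρ p ^ (γ - 1) * dd θ s p + (γ - 1) * s p * ρ p ^ (γ - 1 - 1) * dd θ ρ p) := by
  have hsq : (fun q => sound γ ρ s q ^ 2) =ᶠ[𝓝 p] fun q => γ * (s q * ρ q ^ (γ - 1)) :=
    hc.mono fun q hq => by dsimp only; rw [sound, sq_sqrt hq, mul_assoc]
  simp only [dd, pdx, pdy]
  rw [hsq.fderiv_eq, fderiv_const_mul (hs.fun_mul (hρ.rpow_const (Or.inl hρp)))]
  simp only [smul_apply, smul_eq_mul, fderiv_mul_rpow_apply_s11 hs hρ hρp]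
  ring

end Polytropic

theorem stmt_11_general (γ : ℝ) (hγ : 1 < γ) (U : Set (ℝ × ℝ)) (hU : IsOpen U)
    (u v ρ s σ A : ℝ × ℝ → ℝ)
    (hu : ContDiffOn ℝ 2 u U) (hv : ContDiffOn ℝ 2 v U)
    (hρ : ContDiffOn ℝ 2 ρ U) (hs : ContDiffOn ℝ 2 s U)
    (hρpos : ∀ p ∈ U, 0 < ρ p) (hspos : ∀ p ∈ U, 0 < s p)
    (hmass : ∀ p ∈ U, pdx (fun q => ρ q * u q) p + pdy (fun q => ρ q * v q) p = 0)
    (hmomx : ∀ p ∈ U,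
      u p * pdx u p + v p * pdy u p + (ρ p)⁻¹ * pdx (fun q => s q * ρ q ^ γ) p = 0)
    (hmomy : ∀ p ∈ U,
      u p * pdx v p + v p * pdy v p + (ρ p)⁻¹ * pdy (fun q => s q * ρ q ^ γ) p = 0)
    (hent : ∀ p ∈ U, u p * pdx s p + v p * pdy s p = 0)
    (hsup : ∀ p ∈ U, (sound γ ρ s p) ^ 2 < u p ^ 2 + v p ^ 2)
    (huσ : ∀ p ∈ U, u p = speed u v p * Real.cos (σ p))
    (hvσ : ∀ p ∈ U, v p = speed u v p * Real.sin (σ p))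
    (hsinA : ∀ p ∈ U, Real.sin (A p) = sound γ ρ s p / speed u v p)
    :
    ∀ p ∈ U,
      dd σ (fun q => vort u v q / ρ q) p =
        -((dd (fun r => σ r + A r) s p / sound γ ρ s p ^ ((γ + 1) / (γ - 1))) *
            ((s p * γ) ^ (1 / (γ - 1)) / (γ * (γ - 1) * s p)) *
            dd σ (fun q => sound γ ρ s q ^ 2) p) := by
  intro p hp
  have hnhds := hU.mem_nhds hp
  have hρp := hρpos p hp
  have hsp := hspos p hp
  have hγ0 : 0 < γ := zero_lt_one.trans hγ
  have hγ1 : γ - 1 ≠ 0 := sub_ne_zero.2 hγ.ne'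
  have dρ := (hρ.contDiffAt hnhds).differentiableAt two_ne_zero
  have ds := (hs.contDiffAt hnhds).differentiableAt two_ne_zero
  have hc : 0 < sound γ ρ s p := sqrt_pos.2 (by positivity)
  have hq : 0 < speed u v p := sqrt_pos.2 ((pow_pos hc 2).trans (hsup p hp))
  have hflow (F : ℝ × ℝ → ℝ) : u p * pdx F p + v p * pdy F p = speed u v p * dd σ F p := by
    rw [dd, huσ p hp, hvσ p hp]; ring
  have hent0 : dd σ s p = 0 :=
    (mul_eq_zero.1 ((hflow s).symm.trans (hent p hp))).resolve_left hq.ne'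
  have htransport := vorticity_transport (hu.contDiffAt hnhds) (hv.contDiffAt hnhds) dρ hρp.ne'
    ((hs.contDiffAt hnhds).mul ((hρ.contDiffAt hnhds).rpow_const_of_ne hρp.ne')) (hmass p hp)
    (eventually_of_mem hnhds hmomx) (eventually_of_mem hnhds hmomy)
  rw [hflow, pdy_mul_pdx_sub_pdx_mul_pdy_mul_rpow ds dρ hρp.ne',
    pdy_mul_pdx_sub_pdx_mul_pdy_of_dd_eq_zero hent0] at htransport
  have hcsq : sound γ ρ s p ^ 2 = s p * γ * ρ p ^ (γ - 1) := by
    rw [sound, sq_sqrt (by positivity)]; ring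
  have hpow : ρ p ^ γ = ρ p ^ (γ - 1 - 1) * ρ p ^ 2 := by
    rw [← rpow_natCast, ← rpow_add hρp]; congr 1; push_cast; ring
  have hsoundsq := dd_sound_sq ds dρ hρp.ne' (eventually_of_mem hnhds fun q hq =>
    (by have := hρpos q hq; have := hspos q hq; positivity)) σ
  rw [hsoundsq, hent0, dd_add_eq_of_dd_eq_zero hent0, hsinA p hp,
    rpow_div_sub_one_eq_of_sq_eq hc hρp hγ.ne' hcsq]
  rw [hpow] at htransport
  field_simp at htransport ⊢
  linear_combination (γ - 1) * s p * htransport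

/-- `∂₀(ω/ρ) = −(∂₊s / c^((γ+1)/(γ−1))) · (sγ)^(1/(γ−1)) / (γ(γ−1)s) · ∂₀(c²)`. -/
theorem stmt_11 (γ : ℝ) (hγ : 1 < γ) (U : Set (ℝ × ℝ)) (hU : IsOpen U)
    (u v ρ s σ A : ℝ × ℝ → ℝ)
    (hu : ContDiffOn ℝ 2 u U) (hv : ContDiffOn ℝ 2 v U)
    (hρ : ContDiffOn ℝ 2 ρ U) (hs : ContDiffOn ℝ 2 s U)
    (hσ : ContDiffOn ℝ 1 σ U) (hA : ContDiffOn ℝ 1 A U)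
    (hρpos : ∀ p ∈ U, 0 < ρ p) (hspos : ∀ p ∈ U, 0 < s p)
    (hmass : ∀ p ∈ U, pdx (fun q => ρ q * u q) p + pdy (fun q => ρ q * v q) p = 0)
    (hmomx : ∀ p ∈ U,
      u p * pdx u p + v p * pdy u p + (ρ p)⁻¹ * pdx (fun q => s q * ρ q ^ γ) p = 0)
    (hmomy : ∀ p ∈ U,
      u p * pdx v p + v p * pdy v p + (ρ p)⁻¹ * pdy (fun q => s q * ρ q ^ γ) p = 0)
    (hent : ∀ p ∈ U, u p * pdx s p + v p * pdy s p = 0)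
    (hsup : ∀ p ∈ U, (sound γ ρ s p) ^ 2 < u p ^ 2 + v p ^ 2)
    (huσ : ∀ p ∈ U, u p = speed u v p * Real.cos (σ p))
    (hvσ : ∀ p ∈ U, v p = speed u v p * Real.sin (σ p))
    (hsinA : ∀ p ∈ U, Real.sin (A p) = sound γ ρ s p / speed u v p)
    (hA0 : ∀ p ∈ U, 0 < A p) (hA2 : ∀ p ∈ U, A p < Real.pi / 2)
    :
    ∀ p ∈ U,
      dd σ (fun q => vort u v q / ρ q) p =
        -((dd (fun r => σ r + A r) s p / sound γ ρ s p ^ ((γ + 1) / (γ - 1))) *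
            ((s p * γ) ^ (1 / (γ - 1)) / (γ * (γ - 1) * s p)) *
            dd σ (fun q => sound γ ρ s q ^ 2) p) :=
  stmt_11_general γ hγ U hU u v ρ s σ A hu hv hρ hs hρpos hspos hmass hmomx hmomy hent hsup huσ hvσ
    hsinA

end
end

section
/- Let (u, v, ρ, s) be a C¹ supersonic solution of the smooth-flow 2D steady full Euler system on U, with flow angle σ, Mach angle A ∈ (0, π/2), α = σ + A, and τ = 1/ρ. Then on U: τ_y sₓ − τₓ s_y = −(∂₊s / sin A) ∂₀τ. -/
/-
Since `s` is transported by the flow, `∂₀s = 0`. In the orthonormal frame `(∂₀, ∂₀^⊥)`, with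
`∂₀^⊥` the derivative along the angle `σ + π/2`, the Jacobian `τ_y sₓ − τₓ s_y` therefore reduces
to `−(∂₀^⊥ s)(∂₀τ)`, and `∂₊s = sin A · ∂₀^⊥ s` because `∂₊` is `∂₀` rotated by the angle `A`.
-/

open Real

noncomputable section

theorem dd_add (θ φ f : ℝ × ℝ → ℝ) (p : ℝ × ℝ) :
    dd (fun r => θ r + φ r) f p =
      cos (φ p) * dd θ f p + sin (φ p) * dd (fun r => θ r + π / 2) f p := by
  simp only [dd, cos_add, sin_add, cos_pi_div_two, sin_pi_div_two]
  ring

theorem jacobian_eq_dd_frame (θ f g : ℝ × ℝ → ℝ) (p : ℝ × ℝ) :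
    pdy g p * pdx f p - pdx g p * pdy f p =
      dd θ f p * dd (fun r => θ r + π / 2) g p - dd (fun r => θ r + π / 2) f p * dd θ g p := by
  simp only [dd, cos_add_pi_div_two, sin_add_pi_div_two]
  linear_combination (pdx g p * pdy f p - pdy g p * pdx f p) * cos_sq_add_sin_sq (θ p)

theorem dd_eq_zero_of_transport {u v θ f : ℝ × ℝ → ℝ} {p : ℝ × ℝ}
    (hq : speed u v p ≠ 0)
    (hu : u p = speed u v p * cos (θ p)) (hv : v p = speed u v p * sin (θ p))
    (hf : u p * pdx f p + v p * pdy f p = 0) :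
    dd θ f p = 0 := by
  rw [hu, hv] at hf
  exact (mul_eq_zero.1 (by rw [dd]; linear_combination hf)).resolve_left hq

theorem speed_pos_of_sq_lt {u v : ℝ × ℝ → ℝ} {p : ℝ × ℝ} {c : ℝ}
    (h : c ^ 2 < u p ^ 2 + v p ^ 2) : 0 < speed u v p :=
  sqrt_pos.2 ((sq_nonneg c).trans_lt h)

theorem stmt_14_general (γ : ℝ) (U : Set (ℝ × ℝ))
    (u v ρ s σ A : ℝ × ℝ → ℝ)
    (hent : ∀ p ∈ U, u p * pdx s p + v p * pdy s p = 0)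
    (hsup : ∀ p ∈ U, (sound γ ρ s p) ^ 2 < u p ^ 2 + v p ^ 2)
    (huσ : ∀ p ∈ U, u p = speed u v p * Real.cos (σ p))
    (hvσ : ∀ p ∈ U, v p = speed u v p * Real.sin (σ p))
    (hA0 : ∀ p ∈ U, 0 < A p) (hA2 : ∀ p ∈ U, A p < Real.pi / 2)
    :
    ∀ p ∈ U,
      pdy (fun q => (ρ q)⁻¹) p * pdx s p - pdx (fun q => (ρ q)⁻¹) p * pdy s p =
        -(dd (fun r => σ r + A r) s p / Real.sin (A p)) *
          dd σ (fun q => (ρ q)⁻¹) p := by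
  intro p hp
  have hsinA : sin (A p) ≠ 0 :=
    (sin_pos_of_pos_of_lt_pi (hA0 p hp) ((hA2 p hp).trans (by linarith [pi_pos]))).ne'
  have hs0 : dd σ s p = 0 :=
    dd_eq_zero_of_transport (speed_pos_of_sq_lt (hsup p hp)).ne' (huσ p hp) (hvσ p hp) (hent p hp)
  rw [jacobian_eq_dd_frame σ, dd_add σ A, hs0]
  field_simp
  ring

/-- `τ_y sₓ − τₓ s_y = −(∂₊s / sin A) ∂₀τ`, with `τ = 1/ρ`. -/
theorem stmt_14 (γ : ℝ) (hγ : 1 < γ) (U : Set (ℝ × ℝ)) (hU : IsOpen U)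
    (u v ρ s σ A : ℝ × ℝ → ℝ)
    (hu : ContDiffOn ℝ 1 u U) (hv : ContDiffOn ℝ 1 v U)
    (hρ : ContDiffOn ℝ 1 ρ U) (hs : ContDiffOn ℝ 1 s U)
    (hσ : ContDiffOn ℝ 1 σ U) (hA : ContDiffOn ℝ 1 A U)
    (hρpos : ∀ p ∈ U, 0 < ρ p) (hspos : ∀ p ∈ U, 0 < s p)
    (hmass : ∀ p ∈ U, pdx (fun q => ρ q * u q) p + pdy (fun q => ρ q * v q) p = 0)
    (hmomx : ∀ p ∈ U,
      u p * pdx u p + v p * pdy u p + (ρ p)⁻¹ * pdx (fun q => s q * ρ q ^ γ) p = 0)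
    (hmomy : ∀ p ∈ U,
      u p * pdx v p + v p * pdy v p + (ρ p)⁻¹ * pdy (fun q => s q * ρ q ^ γ) p = 0)
    (hent : ∀ p ∈ U, u p * pdx s p + v p * pdy s p = 0)
    (hsup : ∀ p ∈ U, (sound γ ρ s p) ^ 2 < u p ^ 2 + v p ^ 2)
    (huσ : ∀ p ∈ U, u p = speed u v p * Real.cos (σ p))
    (hvσ : ∀ p ∈ U, v p = speed u v p * Real.sin (σ p))
    (hsinA : ∀ p ∈ U, Real.sin (A p) = sound γ ρ s p / speed u v p)
    (hA0 : ∀ p ∈ U, 0 < A p) (hA2 : ∀ p ∈ U, A p < Real.pi / 2)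
    :
    ∀ p ∈ U,
      pdy (fun q => (ρ q)⁻¹) p * pdx s p - pdx (fun q => (ρ q)⁻¹) p * pdy s p =
        -(dd (fun r => σ r + A r) s p / Real.sin (A p)) *
          dd σ (fun q => (ρ q)⁻¹) p :=
  stmt_14_general γ U u v ρ s σ A hent hsup huσ hvσ hA0 hA2

end
end
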